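/- There is no polynomial p : ℝ → ℝ and no integer N ≥ 1 such that for every integer m and every real u with |u - m| ≤ δ, the N-fold iterate of p satisfies |p^[N](u) - m| ≤ ε, whenever 0 < ε < δ < 1/2. -/
import Mathlib

open Polynomial Filter

lemma iterate_eval_eq (p : Polynomial ℝ) (N : ℕ) :
    ∀ x : ℝ, (fun x => p.eval x)^[N] x
      = ((fun q : Polynomial ℝ => q.comp p)^[N] X).eval x := by
  induction N with
  | zero => simp
  | succ n ih =>
    intro x
    rw [Function.iterate_succ_apply, Function.iterate_succ' (fun q : Polynomial ℝ => q.comp p)]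
    simp [Function.comp, Polynomial.eval_comp, ih (p.eval x)]

/-- No uniform polynomial rounder in discrete time. -/
theorem no_uniform_polynomial_rounder (ε δ : ℝ) (hε : 0 < ε) (hεδ : ε < δ)
    (hδ : δ < 1/2) :
    ¬ ∃ (p : Polynomial ℝ) (N : ℕ), 1 ≤ N ∧
      ∀ (m : ℤ) (u : ℝ), |u - (m : ℝ)| ≤ δ →
        |(fun x => p.eval x)^[N] u - (m : ℝ)| ≤ ε := by
  rintro ⟨p, N, -, h⟩
  set q : Polynomial ℝ := (fun q : Polynomial ℝ => q.comp p)^[N] X with hqdef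
  have hq : ∀ x : ℝ, (fun x => p.eval x)^[N] x = q.eval x := iterate_eval_eq p N
  -- the polynomial r = q - X is bounded by ε on the integers
  set r : Polynomial ℝ := q - X with hrdef
  have hr : ∀ m : ℤ, |r.eval (m : ℝ)| ≤ ε := by
    intro m
    have := h m (m : ℝ) (by simp [hδ.le, le_of_lt (hε.trans hεδ)])
    rw [hq] at this
    simpa [hrdef, sub_sub_eq_add_sub, sub_right_comm] using this
  -- hence r has degree ≤ 0
  have hdeg : r.degree ≤ 0 := by
    by_contra hd
    push_neg at hd
    have htop := Polynomial.abs_tendsto_atTop r hd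
    obtain ⟨x0, hx0⟩ := Filter.eventually_atTop.mp (htop.eventually_ge_atTop (ε + 1))
    have := hx0 (⌈x0⌉ : ℝ) (Int.le_ceil x0)
    have := hr ⌈x0⌉
    linarith
  set c := r.coeff 0 with hcdef
  have hc : r = C c := Polynomial.degree_le_zero_iff.mp hdeg
  -- so q = X + C c, and evaluating at ±δ with m = 0 gives a contradiction
  have hqev : ∀ x : ℝ, q.eval x = x + c := by
    intro x
    have : q = X + C c := by
      have : q - X = C c := hc
      linear_combination (norm := ring_nf) this
    simp [this]
  have h1 := h 0 δ (by simp [abs_of_pos (hε.trans hεδ)])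
  have h2 := h 0 (-δ) (by simp [abs_of_pos (hε.trans hεδ)])
  rw [hq] at h1 h2
  rw [hqev] at h1 h2
  simp only [Int.cast_zero, sub_zero] at h1 h2

  rw [abs_le] at h1 h2
  linarith
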